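/- arXiv:0712.4337 — 2 statements merged into one kernel-verified Lean document; each statement's English description precedes it below -/
import Mathlib

section
/- Every fixed point of a primitive substitution is linearly recurrent with some constant K, and more generally every primitive substitutive sequence (the image of such a fixed point under a letter-to-letter morphism) is linearly recurrent; consequently the minimal subshift generated by such a sequence is linearly recurrent. -/
/-!
Cut the fixed point `y = σⁿ(y)` into the level-`n` blocks `σⁿ(y k)`. By primitivity there is one
level `N` such that every two-letter factor of `y` lies in `σᴺ(c)` for every letter `c`; as `y` is
a concatenation of such blocks, each two-letter factor recurs in `y` with bounded gaps `G`.
A nonempty factor `u` lies inside the image `σⁿ(ab)` of a two-letter factor `ab` at the least level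
`n` at which all blocks are at least `|u|` long. At that level the blocks have length `O(|u|)`, so
`σⁿ(ab)`, and with it `u`, recurs with gaps `O(G |u|)`. Such gap bounds bound the return words,
pass to letter-to-letter images, and make the generated subshift minimal.
-/

/-- Extension of a morphism `σ : A → A*` to words by concatenation. -/
def substWord {A : Type*} (σ : A → List A) (w : List A) : List A := w.flatMap σ

/-- `σⁿ(u)` : the `n`-th iterate of the morphism `σ` applied to the word `u`. -/
def wordIter {A : Type*} (σ : A → List A) (n : ℕ) (u : List A) : List A :=
  (substWord σ)^[n] u

/-- The prefix of length `n` of a one-sided sequence. -/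
def seqPrefix {A : Type*} (x : ℕ → A) (n : ℕ) : List A := (List.range n).map x

/-- The word `w` is a prefix of the sequence `x`. -/
def IsPrefixSeq {A : Type*} (w : List A) (x : ℕ → A) : Prop := w = seqPrefix x w.length

/-- `x` is a fixed point of `σ`, i.e. `σ(x) = x`: the image under `σ` of every prefix
of `x` is again a prefix of `x`. -/
def IsFixedPoint {A : Type*} (σ : A → List A) (x : ℕ → A) : Prop :=
  ∀ n, IsPrefixSeq (substWord σ (seqPrefix x n)) x

/-- `σ` is a substitution: some letter `a` is the first letter of `σ(a)`, and
`|σⁿ(b)| → ∞` for every letter `b`. -/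
def IsSubstitution {A : Type*} (σ : A → List A) : Prop :=
  (∃ a, (σ a).head? = some a) ∧
  ∀ b, Filter.Tendsto (fun n => (wordIter σ n [b]).length) Filter.atTop Filter.atTop

/-- `σ` is of constant length `p`. -/
def ConstantLength {A : Type*} (σ : A → List A) (p : ℕ) : Prop := ∀ a, (σ a).length = p
/-- The factor `x_{[i, i+n)}` of a sequence. -/
def factorAt {A : Type*} (x : ℕ → A) (i n : ℕ) : List A := (List.range n).map fun k => x (i + k)

/-- `i` is an occurrence of the word `u` in the sequence `x`. -/
def OccursAt {A : Type*} (x : ℕ → A) (u : List A) (i : ℕ) : Prop := factorAt x i u.length = u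

/-- `u` is a factor of `x`. -/
def IsFactor {A : Type*} (x : ℕ → A) (u : List A) : Prop := ∃ i, OccursAt x u i

/-- `u` occurs in `x` with bounded gaps (its set of occurrences is syndetic). -/
def BoundedGaps {A : Type*} (x : ℕ → A) (u : List A) : Prop :=
  ∃ g, 0 < g ∧ ∀ i, ∃ j, i ≤ j ∧ j < i + g ∧ OccursAt x u j

/-- `x` is uniformly recurrent: every factor occurs with bounded gaps. -/
def UniformlyRecurrent {A : Type*} (x : ℕ → A) : Prop :=
  ∀ u, IsFactor x u → BoundedGaps x u

/-- `w` is a return word to `u` in `x`: `w = x_{[j,k)}` for consecutive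
occurrences `j < k` of `u` in `x`. -/
def IsReturnWord {A : Type*} (x : ℕ → A) (u w : List A) : Prop :=
  ∃ j k, j < k ∧ OccursAt x u j ∧ OccursAt x u k ∧
    (∀ m, j < m → m < k → ¬ OccursAt x u m) ∧ w = factorAt x j (k - j)

/-- `x` is linearly recurrent with constant `K`: it is uniformly recurrent and every
return word `w` to every nonempty factor `u` satisfies `|w| ≤ K|u|`. -/
def LinearlyRecurrent {A : Type*} (x : ℕ → A) (K : ℕ) : Prop :=
  UniformlyRecurrent x ∧ ∀ u w, u ≠ [] → IsReturnWord x u w → w.length ≤ K * u.length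

/-- `x` is ultimately periodic. -/
def UltimatelyPeriodic {A : Type*} (x : ℕ → A) : Prop :=
  ∃ N t, 0 < t ∧ ∀ n, N ≤ n → x (n + t) = x n
/-- The language of a substitution: all words occurring as factors of some `σⁿ(b)`. -/
def Lang {A : Type*} (σ : A → List A) : Set (List A) := { w | ∃ n b, w <:+: wordIter σ n [b] }

/-- `σ` is primitive: for some `n`, every letter of `A` occurs in `σⁿ(b)` for every `b`. -/
def IsPrimitive {A : Type*} (σ : A → List A) : Prop :=
  ∃ n, ∀ a b : A, a ∈ wordIter σ n [b]

/-- The shift transformation on one-sided sequences. -/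
def shift {A : Type*} (x : ℕ → A) : ℕ → A := fun n => x (n + 1)

/-- The substitution subshift `X_σ`: sequences all of whose factors belong to `L(σ)`. -/
def Xsub {A : Type*} (σ : A → List A) : Set (ℕ → A) := { x | ∀ u, IsFactor x u → u ∈ Lang σ }

/-- The language of (the elements of) a subshift. -/
def LangOf {A : Type*} (X : Set (ℕ → A)) : Set (List A) := { w | ∃ x ∈ X, IsFactor x w }

/-- The subshift generated by `x`: all sequences whose factors are factors of `x`. -/
def Omega {A : Type*} (x : ℕ → A) : Set (ℕ → A) := { y | ∀ u, IsFactor y u → IsFactor x u }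

/-- The set of return words to `u` in the subshift `X`. -/
def ReturnWordsOf {A : Type*} (X : Set (ℕ → A)) (u : List A) : Set (List A) :=
  { w | ∃ x ∈ X, IsReturnWord x u w }

open Filter

section

variable {A C : Type*}

section Words

variable (σ : A → List A)

lemma substWord_append (u v : List A) :
    substWord σ (u ++ v) = substWord σ u ++ substWord σ v := by
  simp [substWord]

lemma wordIter_succ (n : ℕ) (u : List A) :
    wordIter σ (n + 1) u = wordIter σ n (substWord σ u) :=
  Function.iterate_succ_apply _ _ _

lemma wordIter_succ' (n : ℕ) (u : List A) :
    wordIter σ (n + 1) u = substWord σ (wordIter σ n u) :=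
  Function.iterate_succ_apply' _ _ _

lemma wordIter_add (m n : ℕ) (u : List A) :
    wordIter σ (m + n) u = wordIter σ m (wordIter σ n u) :=
  Function.iterate_add_apply _ _ _ _

lemma wordIter_nil (n : ℕ) : wordIter σ n [] = [] := by
  induction n with
  | zero => rfl
  | succ n ih => rw [wordIter_succ', ih]; rfl

lemma wordIter_append (n : ℕ) (u v : List A) :
    wordIter σ n (u ++ v) = wordIter σ n u ++ wordIter σ n v := by
  induction n generalizing u v with
  | zero => rfl
  | succ n ih => simp only [wordIter_succ, substWord_append, ih]

lemma wordIter_cons (n : ℕ) (a : A) (u : List A) :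
    wordIter σ n (a :: u) = wordIter σ n [a] ++ wordIter σ n u :=
  wordIter_append σ n [a] u

lemma wordIter_infix_of_mem (n : ℕ) {a : A} {w : List A} (h : a ∈ w) :
    wordIter σ n [a] <:+: wordIter σ n w := by
  obtain ⟨s, t, rfl⟩ := List.append_of_mem h
  exact ⟨wordIter σ n s, wordIter σ n t, by simp only [← wordIter_append, List.append_assoc,
    List.singleton_append]⟩

end Words

section Factors

variable {x : ℕ → A}

lemma seqPrefix_length (x : ℕ → A) (n : ℕ) : (seqPrefix x n).length = n := by
  simp [seqPrefix]

lemma factorAt_length (x : ℕ → A) (i n : ℕ) : (factorAt x i n).length = n := by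
  simp [factorAt]

lemma seqPrefix_add (x : ℕ → A) (p l : ℕ) :
    seqPrefix x (p + l) = seqPrefix x p ++ factorAt x p l := by
  simp [seqPrefix, factorAt, List.range_add, Function.comp_def]

lemma factorAt_add (x : ℕ → A) (p a b : ℕ) :
    factorAt x p (a + b) = factorAt x p a ++ factorAt x (p + a) b := by
  simp [factorAt, List.range_add, Function.comp_def, Nat.add_assoc]

lemma factorAt_one (x : ℕ → A) (k : ℕ) : factorAt x k 1 = [x k] := by
  simp [factorAt]

lemma factorAt_two (x : ℕ → A) (k : ℕ) : factorAt x k 2 = [x k, x (k + 1)] := by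
  simp [factorAt, List.range_succ]

lemma occursAt_factorAt (x : ℕ → A) (i n : ℕ) : OccursAt x (factorAt x i n) i := by
  rw [OccursAt, factorAt_length]

lemma occursAt_nil (x : ℕ → A) (i : ℕ) : OccursAt x [] i := rfl

lemma IsPrefixSeq.occursAt_append {w v : List A} (h : IsPrefixSeq (w ++ v) x) :
    OccursAt x v w.length := by
  rw [IsPrefixSeq, List.length_append, seqPrefix_add] at h
  exact ((List.append_inj h (seqPrefix_length x _).symm).2).symm

lemma OccursAt.exists_occursAt_of_infix {u v : List A} {p : ℕ} (hv : OccursAt x v p)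
    (huv : u <:+: v) : ∃ t, t + u.length ≤ v.length ∧ OccursAt x u (p + t) := by
  obtain ⟨s, e, rfl⟩ := huv
  refine ⟨s.length, by simp, ?_⟩
  rw [OccursAt, List.length_append, List.length_append, factorAt_add, factorAt_add] at hv
  have hse := List.append_inj hv (by simp [factorAt_length])
  exact (List.append_inj hse.1 (factorAt_length _ _ _)).2

lemma OccursAt.factorAt_infix {w : List A} {p i m : ℕ} (hw : OccursAt x w p) (hpi : p ≤ i)
    (him : i + m ≤ p + w.length) : factorAt x i m <:+: w := by
  set r := p + w.length - (i + m)
  have hlen : w.length = (i - p) + (m + r) := by omega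
  have h := factorAt_add x p (i - p) (m + r)
  rw [Nat.add_sub_cancel' hpi, factorAt_add x i m r, ← hlen, hw] at h
  exact ⟨_, _, by rw [h, List.append_assoc]⟩

lemma OccursAt.map (φ : A → C) {u : List A} {i : ℕ} (h : OccursAt x u i) :
    OccursAt (φ ∘ x) (u.map φ) i := by
  rw [OccursAt, List.length_map, ← h]
  simp [factorAt]

lemma IsFactor.exists_map_eq {φ : A → C} {u : List C} (hu : IsFactor (φ ∘ x) u) :
    ∃ v, IsFactor x v ∧ v.map φ = u := by
  obtain ⟨i, hi⟩ := hu
  refine ⟨factorAt x i u.length, ⟨i, occursAt_factorAt x i _⟩, ?_⟩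
  rw [← hi]
  simp [factorAt]

end Factors

def WindowSyndetic (S : Set ℕ) (g : ℕ) : Prop := ∀ i, ∃ j ∈ S, i ≤ j ∧ j < i + g

lemma StrictMono.exists_le_lt_succ {f : ℕ → ℕ} (hf : StrictMono f) {i : ℕ} (h0 : f 0 ≤ i) :
    ∃ k, f k ≤ i ∧ i < f (k + 1) := by
  obtain ⟨k, hk, hk'⟩ := hf.exists_between_of_tendsto_atTop hf.tendsto_atTop (x := i + 1)
    (Nat.lt_succ_of_le h0)
  exact ⟨k, Nat.le_of_lt_succ hk, hk'⟩

lemma le_add_mul_of_succ_le {f : ℕ → ℕ} {M : ℕ} (hM : ∀ k, f (k + 1) ≤ f k + M) (k c : ℕ) :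
    f (k + c) ≤ f k + c * M := by
  induction c with
  | zero => simp
  | succ c ih => rw [← Nat.add_assoc, Nat.succ_mul]; linarith [hM (k + c)]

namespace WindowSyndetic

variable {S T : Set ℕ} {g : ℕ}

lemma mono (h : WindowSyndetic S g) (hST : S ⊆ T) {g' : ℕ} (hg : g ≤ g') :
    WindowSyndetic T g' := fun i =>
  let ⟨j, hj, hij, hji⟩ := h i
  ⟨j, hST hj, hij, by omega⟩

lemma pos (h : WindowSyndetic S g) : 0 < g := by
  obtain ⟨j, -, h0, hj⟩ := h 0
  omega

lemma of_forall_near (h : WindowSyndetic S g) {d : ℕ}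
    (hT : ∀ j ∈ S, ∃ k ∈ T, j ≤ k ∧ k ≤ j + d) : WindowSyndetic T (g + d) := fun i =>
  let ⟨j, hj, hij, hji⟩ := h i
  let ⟨k, hk, hjk, hkj⟩ := hT j hj
  ⟨k, hk, by omega, by omega⟩

lemma image {f : ℕ → ℕ} (hf : StrictMono f) (hf0 : f 0 = 0) {M : ℕ}
    (hM : ∀ k, f (k + 1) ≤ f k + M) (h : WindowSyndetic S g) :
    WindowSyndetic (f '' S) (g * M + 1) := by
  intro i
  obtain ⟨k, hki, hik⟩ := hf.exists_le_lt_succ (i := i) (by omega)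
  obtain ⟨q, hq, hkq, hqk⟩ := h (k + 1)
  have hfq : f q ≤ f k + (q - k) * M := by
    have := le_add_mul_of_succ_le hM k (q - k)
    rwa [Nat.add_sub_cancel' (by omega)] at this
  have hqkM : (q - k) * M ≤ g * M := Nat.mul_le_mul_right _ (by omega)
  exact ⟨f q, ⟨q, hq, rfl⟩, (hik.trans_le (hf.monotone hkq)).le, by omega⟩

end WindowSyndetic

lemma WindowSyndetic.boundedGaps {x : ℕ → A} {u : List A} {g : ℕ}
    (h : WindowSyndetic {j | OccursAt x u j} g) : BoundedGaps x u :=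
  ⟨g, h.pos, fun i => let ⟨j, hj, hij, hji⟩ := h i; ⟨j, hij, hji, hj⟩⟩

lemma IsReturnWord.length_le {x : ℕ → A} {u w : List A} (hw : IsReturnWord x u w) {g : ℕ}
    (h : WindowSyndetic {j | OccursAt x u j} g) : w.length ≤ g := by
  obtain ⟨j, k, hjk, -, -, hnone, rfl⟩ := hw
  obtain ⟨m, hm, hjm, hmg⟩ := h (j + 1)
  have hkm : k ≤ m := by
    by_contra! hmk
    exact hnone m (by omega) hmk hm
  rw [factorAt_length]
  omega

section Substitution

variable {σ : A → List A} {y : ℕ → A}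

lemma IsSubstitution.ne_nil (hσ : IsSubstitution σ) (b : A) : σ b ≠ [] := by
  intro hb
  obtain ⟨n, hn⟩ := ((hσ.2 b).eventually_gt_atTop 0).exists_forall_of_atTop
  have h := hn (n + 1) (by omega)
  rw [wordIter_succ, substWord, List.flatMap_singleton, hb, wordIter_nil] at h
  exact h.false

lemma length_wordIter_singleton_pos (hne : ∀ b, σ b ≠ []) (n : ℕ) (b : A) :
    0 < (wordIter σ n [b]).length := by
  induction n generalizing b with
  | zero => simp [wordIter]
  | succ n ih =>
    obtain ⟨c, l, hcl⟩ := List.exists_cons_of_ne_nil (hne b)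
    rw [wordIter_succ, substWord, List.flatMap_singleton, hcl, wordIter_cons, List.length_append]
    exact Nat.add_pos_left (ih c) _

lemma mem_wordIter_of_le {n₀ : ℕ} (hp : ∀ a b : A, a ∈ wordIter σ n₀ [b])
    (hne : ∀ b, σ b ≠ []) {n : ℕ} (hn : n₀ ≤ n) (a b : A) : a ∈ wordIter σ n [b] := by
  obtain ⟨k, rfl⟩ := Nat.exists_eq_add_of_le hn
  obtain ⟨d, hd⟩ := List.exists_mem_of_length_pos (length_wordIter_singleton_pos hne k b)
  rw [wordIter_add]
  exact (wordIter_infix_of_mem σ n₀ hd).subset (hp a d)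

lemma IsFixedPoint.isPrefixSeq_wordIter (hy : IsFixedPoint σ y) (n k : ℕ) :
    IsPrefixSeq (wordIter σ n (seqPrefix y k)) y := by
  induction n with
  | zero => exact (congrArg (seqPrefix y) (seqPrefix_length y k)).symm
  | succ n ih =>
    rw [wordIter_succ', ih]
    exact hy _

/-- `σⁿ(y) = y` cuts `y` into the blocks `σⁿ(y k)`; the `k`-th one starts here. -/
def blockPos (σ : A → List A) (y : ℕ → A) (n k : ℕ) : ℕ :=
  (wordIter σ n (seqPrefix y k)).length

lemma blockPos_zero (n : ℕ) : blockPos σ y n 0 = 0 := by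
  simp [blockPos, seqPrefix, wordIter_nil]

lemma blockPos_succ (n k : ℕ) :
    blockPos σ y n (k + 1) = blockPos σ y n k + (wordIter σ n [y k]).length := by
  rw [blockPos, seqPrefix_add, factorAt_one, wordIter_append, List.length_append, blockPos]

lemma blockPos_strictMono (hne : ∀ b, σ b ≠ []) (n : ℕ) : StrictMono (blockPos σ y n) :=
  strictMono_nat_of_lt_succ fun k => by
    rw [blockPos_succ]
    exact Nat.lt_add_of_pos_right (length_wordIter_singleton_pos hne n _)

lemma IsFixedPoint.occursAt_wordIter_blockPos (hy : IsFixedPoint σ y) {v : List A} {q : ℕ}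
    (hv : OccursAt y v q) (n : ℕ) : OccursAt y (wordIter σ n v) (blockPos σ y n q) := by
  have h := hy.isPrefixSeq_wordIter n (q + v.length)
  rw [seqPrefix_add, hv, wordIter_append] at h
  exact h.occursAt_append

lemma IsFixedPoint.exists_infix_wordIter_factorAt_two (hy : IsFixedPoint σ y)
    (hne : ∀ b, σ b ≠ []) {n : ℕ} {u : List A} (hu : IsFactor y u)
    (hlong : ∀ b, u.length ≤ (wordIter σ n [b]).length) :
    ∃ k, u <:+: wordIter σ n (factorAt y k 2) := by
  obtain ⟨i, hi⟩ := hu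
  obtain ⟨k, hki, hik⟩ := (blockPos_strictMono (y := y) hne n).exists_le_lt_succ
    (i := i) (by rw [blockPos_zero]; omega)
  have hocc := hy.occursAt_wordIter_blockPos (occursAt_factorAt y k 2) n
  have hlen : (wordIter σ n (factorAt y k 2)).length
      = (wordIter σ n [y k]).length + (wordIter σ n [y (k + 1)]).length := by
    rw [factorAt_two, wordIter_cons, List.length_append]
  rw [blockPos_succ] at hik
  refine ⟨k, hi ▸ hocc.factorAt_infix hki ?_⟩
  linarith [hlong (y (k + 1))]

end Substitution

section Finite

variable [Fintype A] {σ : A → List A} {y : ℕ → A}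

variable (σ) in
def maxLen (n : ℕ) : ℕ := Finset.univ.sup fun b => (wordIter σ n [b]).length

lemma length_wordIter_le_maxLen (n : ℕ) (b : A) : (wordIter σ n [b]).length ≤ maxLen σ n :=
  Finset.le_sup (f := fun b => (wordIter σ n [b]).length) (Finset.mem_univ b)

lemma blockPos_succ_le (n k : ℕ) : blockPos σ y n (k + 1) ≤ blockPos σ y n k + maxLen σ n := by
  rw [blockPos_succ]
  exact Nat.add_le_add_left (length_wordIter_le_maxLen n _) _

lemma length_wordIter_le (n : ℕ) (w : List A) :
    (wordIter σ n w).length ≤ maxLen σ n * w.length := by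
  induction w with
  | nil => simp [wordIter_nil]
  | cons a w ih =>
    rw [wordIter_cons, List.length_append, List.length_cons, Nat.mul_succ]
    linarith [length_wordIter_le_maxLen (σ := σ) n a]

lemma maxLen_add_le (m n : ℕ) : maxLen σ (m + n) ≤ maxLen σ m * maxLen σ n :=
  Finset.sup_le fun c _ => by
    rw [wordIter_add]
    exact (length_wordIter_le m _).trans
      (Nat.mul_le_mul_left _ (length_wordIter_le_maxLen n c))

lemma maxLen_le_length_of_forall_mem {n₀ : ℕ} (hp : ∀ a b : A, a ∈ wordIter σ n₀ [b])
    (k : ℕ) (b : A) : maxLen σ k ≤ (wordIter σ (k + n₀) [b]).length :=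
  Finset.sup_le fun c _ => by
    rw [wordIter_add]
    exact (wordIter_infix_of_mem σ k (hp c b)).length_le

lemma IsSubstitution.eventually_le_length (hσ : IsSubstitution σ) (m : ℕ) :
    ∀ᶠ n in atTop, ∀ b, m ≤ (wordIter σ n [b]).length :=
  eventually_all.2 fun b => (hσ.2 b).eventually_ge_atTop m

/-- The least level `n` at which all blocks `σⁿ(b)` are at least `m` long has blocks of length
`O(m)`: at level `n - 1` some block is shorter than `m`, by primitivity every block of level
`n - 1` is longer than all blocks of level `n - 1 - n₀`, and `maxLen` is submultiplicative. -/
lemma IsSubstitution.exists_maxLen_le_mul (hσ : IsSubstitution σ) (hprim : IsPrimitive σ) :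
    ∃ Q, ∀ m, 0 < m → ∃ n, (∀ b, m ≤ (wordIter σ n [b]).length) ∧ maxLen σ n ≤ Q * m := by
  classical
  obtain ⟨n₀, hp⟩ := hprim
  set Q := (Finset.range (n₀ + 2)).sup (maxLen σ)
  have hQ : ∀ n ≤ n₀ + 1, maxLen σ n ≤ Q := fun n hn =>
    Finset.le_sup (f := maxLen σ) (Finset.mem_range.2 (by omega))
  refine ⟨Q, fun m hm => ?_⟩
  have hex := (hσ.eventually_le_length m).exists
  refine ⟨Nat.find hex, Nat.find_spec hex, ?_⟩
  obtain hle | ⟨n, hn₀, hn⟩ : Nat.find hex ≤ n₀ ∨ ∃ n, n₀ ≤ n ∧ Nat.find hex = n + 1 :=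
    (le_or_gt _ n₀).imp_right fun h => ⟨Nat.find hex - 1, by omega, by omega⟩
  · exact (hQ _ (by omega)).trans (Nat.le_mul_of_pos_right Q hm)
  · obtain ⟨b, hb⟩ : ∃ b, (wordIter σ n [b]).length < m := by
      simpa using Nat.find_min hex (m := n) (by omega)
    have hshort := maxLen_le_length_of_forall_mem hp (n - n₀) b
    rw [Nat.sub_add_cancel hn₀] at hshort
    calc maxLen σ (Nat.find hex) = maxLen σ ((n₀ + 1) + (n - n₀)) := by congr 1; omega
      _ ≤ maxLen σ (n₀ + 1) * maxLen σ (n - n₀) := maxLen_add_le _ _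
      _ ≤ Q * m := Nat.mul_le_mul (hQ _ le_rfl) (by omega)

lemma IsFixedPoint.eventually_infix_wordIter (hy : IsFixedPoint σ y) (hσ : IsSubstitution σ)
    (hprim : IsPrimitive σ) {u : List A} (hu : IsFactor y u) :
    ∀ᶠ N in atTop, ∀ c, u <:+: wordIter σ N [c] := by
  obtain ⟨n₀, hp⟩ := hprim
  obtain ⟨i, hi⟩ := hu
  obtain ⟨p, hp_long⟩ := (hσ.eventually_le_length (i + u.length)).exists
  have hprefix : OccursAt y (wordIter σ p [y 0]) 0 := by
    simpa only [factorAt_one, blockPos_zero] using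
      hy.occursAt_wordIter_blockPos (occursAt_factorAt y 0 1) p
  have hinfix : u <:+: wordIter σ p [y 0] :=
    hi ▸ hprefix.factorAt_infix (Nat.zero_le i) (by linarith [hp_long (y 0)])
  refine eventually_atTop.2 ⟨p + n₀, fun N hN c => ?_⟩
  rw [← Nat.add_sub_cancel' (le_of_add_le_left hN), wordIter_add]
  exact hinfix.trans <| wordIter_infix_of_mem σ p <|
    mem_wordIter_of_le hp hσ.ne_nil (by omega) _ _

lemma IsFixedPoint.exists_factorAt_two_infix (hy : IsFixedPoint σ y) (hσ : IsSubstitution σ)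
    (hprim : IsPrimitive σ) : ∃ N, ∀ k c, factorAt y k 2 <:+: wordIter σ N [c] := by
  have h : ∀ᶠ N in atTop, ∀ u ∈ {u : List A | u.length = 2}, IsFactor y u →
      ∀ c, u <:+: wordIter σ N [c] :=
    (List.finite_length_eq A 2).eventually_all.2 fun _ _ =>
      eventually_imp_distrib_left.2 (hy.eventually_infix_wordIter hσ hprim)
  obtain ⟨N, hN⟩ := h.exists
  exact ⟨N, fun k => hN _ (factorAt_length y k 2) ⟨k, occursAt_factorAt y k 2⟩⟩

lemma IsFixedPoint.windowSyndetic_of_forall_infix (hy : IsFixedPoint σ y)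
    (hne : ∀ b, σ b ≠ []) {N : ℕ} {v : List A} (hv : ∀ c, v <:+: wordIter σ N [c]) :
    WindowSyndetic {j | OccursAt y v j} (2 * maxLen σ N + 1) := by
  have hblocks : WindowSyndetic (blockPos σ y N '' Set.univ) (1 * maxLen σ N + 1) :=
    WindowSyndetic.image (blockPos_strictMono hne N) (blockPos_zero N) (blockPos_succ_le N)
      (fun i => ⟨i, trivial, le_rfl, Nat.lt_succ_self i⟩)
  refine (hblocks.of_forall_near (d := maxLen σ N) ?_).mono subset_rfl (by omega)
  rintro _ ⟨k, -, rfl⟩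
  obtain ⟨t, ht, hocc⟩ :=
    (hy.occursAt_wordIter_blockPos (factorAt_one y k ▸ occursAt_factorAt y k 1) N)
      |>.exists_occursAt_of_infix (hv (y k))
  exact ⟨_, hocc, Nat.le_add_right _ _,
    by linarith [length_wordIter_le_maxLen (σ := σ) N (y k)]⟩

lemma IsFixedPoint.windowSyndetic_wordIter (hy : IsFixedPoint σ y) (hne : ∀ b, σ b ≠ [])
    {v : List A} {g : ℕ} (h : WindowSyndetic {j | OccursAt y v j} g) (n : ℕ) :
    WindowSyndetic {j | OccursAt y (wordIter σ n v) j} (g * maxLen σ n + 1) :=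
  (h.image (blockPos_strictMono hne n) (blockPos_zero n) (blockPos_succ_le n)).mono
    (by rintro _ ⟨q, hq, rfl⟩; exact hy.occursAt_wordIter_blockPos hq n) le_rfl

lemma IsFixedPoint.exists_windowSyndetic_le_mul (hy : IsFixedPoint σ y) (hσ : IsSubstitution σ)
    (hprim : IsPrimitive σ) :
    ∃ K, ∀ u, IsFactor y u → u ≠ [] → WindowSyndetic {j | OccursAt y u j} (K * u.length) := by
  have hne := hσ.ne_nil
  obtain ⟨N, hN⟩ := hy.exists_factorAt_two_infix hσ hprim
  set G := 2 * maxLen σ N + 1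
  obtain ⟨Q, hQ⟩ := hσ.exists_maxLen_le_mul hprim
  refine ⟨(G + 3) * Q, fun u hu hne_u => ?_⟩
  obtain ⟨n, hlong, hMn⟩ := hQ u.length (List.length_pos_iff.2 hne_u)
  obtain ⟨k, hk⟩ := hy.exists_infix_wordIter_factorAt_two hne hu hlong
  have hpair := hy.windowSyndetic_wordIter hne
    (hy.windowSyndetic_of_forall_infix hne (hN k)) n
  have hu_window := hpair.of_forall_near (T := {j | OccursAt y u j}) (d := 2 * maxLen σ n)
    fun j hj => by
      obtain ⟨t, ht, hocc⟩ := OccursAt.exists_occursAt_of_infix hj hk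
      have := length_wordIter_le (σ := σ) n (factorAt y k 2)
      rw [factorAt_length] at this
      exact ⟨_, hocc, Nat.le_add_right _ _, by linarith⟩
  have hM : 0 < maxLen σ n :=
    (length_wordIter_singleton_pos hne n (y 0)).trans_le (length_wordIter_le_maxLen n _)
  refine hu_window.mono subset_rfl ?_
  calc G * maxLen σ n + 1 + 2 * maxLen σ n ≤ (G + 3) * maxLen σ n := by nlinarith
    _ ≤ (G + 3) * (Q * u.length) := Nat.mul_le_mul_left _ hMn
    _ = (G + 3) * Q * u.length := by ring

end Finite

lemma linearlyRecurrent_of_windowSyndetic {x : ℕ → A} {K : ℕ}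
    (h : ∀ u, IsFactor x u → u ≠ [] → WindowSyndetic {j | OccursAt x u j} (K * u.length)) :
    LinearlyRecurrent x K := by
  refine ⟨fun u hu => ?_, fun u w hne hw => hw.length_le (h u ?_ hne)⟩
  · rcases eq_or_ne u [] with rfl | hne
    · exact ⟨1, one_pos, fun i => ⟨i, le_rfl, Nat.lt_succ_self i, occursAt_nil x i⟩⟩
    · exact (h u hu hne).boundedGaps
  · obtain ⟨j, -, -, hj, -⟩ := hw
    exact ⟨j, hj⟩

lemma linearlyRecurrent_comp_of_windowSyndetic {y : ℕ → A} {K : ℕ}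
    (h : ∀ u, IsFactor y u → u ≠ [] → WindowSyndetic {j | OccursAt y u j} (K * u.length))
    (φ : A → C) : LinearlyRecurrent (φ ∘ y) K := by
  refine linearlyRecurrent_of_windowSyndetic fun u hu hne => ?_
  obtain ⟨v, hv, rfl⟩ := hu.exists_map_eq
  rw [List.length_map]
  exact (h v hv (by rintro rfl; exact hne rfl)).mono (fun j hj => hj.map φ) le_rfl

lemma Omega_eq_of_uniformlyRecurrent {x z : ℕ → A} (hx : UniformlyRecurrent x)
    (hz : z ∈ Omega x) : Omega z = Omega x := by
  have hfactor : ∀ u, IsFactor x u → IsFactor z u := by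
    intro u hu
    obtain ⟨g, -, hgap⟩ := hx u hu
    obtain ⟨p, hp⟩ := hz _ ⟨0, occursAt_factorAt z 0 (g + u.length)⟩
    obtain ⟨j, hpj, hjp, hj⟩ := hgap p
    have hinfix := hp.factorAt_infix (m := u.length) hpj (by rw [factorAt_length]; omega)
    rw [hj] at hinfix
    obtain ⟨t, -, ht⟩ := (occursAt_factorAt z 0 _).exists_occursAt_of_infix hinfix
    exact ⟨_, ht⟩
  ext w
  exact ⟨fun hw u hu => hz u (hw u hu), fun hw u hu => hfactor u (hw u hu)⟩

end

theorem primitive_substitutive_linearly_recurrent_general {A C : Type*} [Fintype A]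
    (σ : A → List A) (hσ : IsSubstitution σ) (hprim : IsPrimitive σ)
    (y : ℕ → A) (hy : IsFixedPoint σ y) (φ : A → C) :
    (∃ K, LinearlyRecurrent y K) ∧
    (∃ K, LinearlyRecurrent (φ ∘ y) K) ∧
    (∀ z ∈ Omega (φ ∘ y), Omega z = Omega (φ ∘ y)) ∧
    (∃ K, ∃ z ∈ Omega (φ ∘ y), LinearlyRecurrent z K) := by
  obtain ⟨K, hK⟩ := hy.exists_windowSyndetic_le_mul hσ hprim
  have hφy : LinearlyRecurrent (φ ∘ y) K := linearlyRecurrent_comp_of_windowSyndetic hK φ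
  exact ⟨⟨K, linearlyRecurrent_of_windowSyndetic hK⟩, ⟨K, hφy⟩,
    fun z hz => Omega_eq_of_uniformlyRecurrent hφy.1 hz, ⟨K, φ ∘ y, fun _ h => h, hφy⟩⟩

/-- **Linear recurrence of primitive substitutive sequences.** Every fixed point `y` of a
primitive substitution is linearly recurrent (with some constant `K`), and so is its image
`φ ∘ y` under any letter-to-letter morphism; consequently the subshift generated by `φ ∘ y`
is minimal and linearly recurrent (it contains a linearly recurrent sequence). -/
theorem primitive_substitutive_linearly_recurrent {A C : Type*} [Fintype A] [Fintype C]
    (σ : A → List A) (hσ : IsSubstitution σ) (hprim : IsPrimitive σ)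
    (y : ℕ → A) (hy : IsFixedPoint σ y) (φ : A → C) :
    (∃ K, LinearlyRecurrent y K) ∧
    (∃ K, LinearlyRecurrent (φ ∘ y) K) ∧
    (∀ z ∈ Omega (φ ∘ y), Omega z = Omega (φ ∘ y)) ∧
    (∃ K, ∃ z ∈ Omega (φ ∘ y), LinearlyRecurrent z K) :=
  primitive_substitutive_linearly_recurrent_general σ hσ hprim y hy φ
end

section
/- Let α and β be real numbers with α > 1 and β > 1 that are multiplicatively independent. Then the set { αⁿ/β^m : n, m ∈ ℕ } is dense in the positive reals (0, ∞). -/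
open Real

/-- helper: boost a witness by iterated translation -/
private lemma exists_step_down {s c ε : ℝ} (hs : s < 0) (hc : 0 < c) (hεc : ε ≤ c)
    (hsε : -ε < s) : ∃ k : ℕ, 0 < c + k * s ∧ c + k * s < ε := by
  have harch : ∃ k : ℕ, c + (k : ℝ) * s < ε := by
    obtain ⟨k, hk⟩ := Archimedean.arch c (neg_pos.mpr hs)
    refine ⟨k, ?_⟩
    have : (k : ℝ) * (-s) ≥ c := by simpa [nsmul_eq_mul] using hk
    nlinarith
  classical
  obtain ⟨k, hk, hkmin⟩ : ∃ k : ℕ, (c + (k : ℝ) * s < ε) ∧ ∀ j < k, ¬ (c + (j : ℝ) * s < ε) :=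
    ⟨Nat.find harch, Nat.find_spec harch, fun j hj => Nat.find_min harch hj⟩
  refine ⟨k, ?_, hk⟩
  rcases Nat.eq_zero_or_pos k with h0 | h0
  · subst h0; push_cast at hk; linarith
  · have hprev := hkmin (k - 1) (by omega)
    push_neg at hprev
    have hstep : c + (k:ℝ) * s = (c + ((k - 1 : ℕ):ℝ) * s) + s := by
      rw [Nat.cast_pred h0]; ring
    linarith

/-- **Density of `{αⁿ/β^m}`.** If `α, β > 1` are multiplicatively independent real
numbers, then the set `{ αⁿ/β^m : n, m ∈ ℕ }` is dense in `(0, ∞)`. -/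
theorem dense_ratio_powers (α β : ℝ) (hα : 1 < α) (hβ : 1 < β)
    (hind : ∀ k l : ℕ, α ^ k = β ^ l → k = 0 ∧ l = 0) :
    ∀ x ∈ Set.Ioi (0 : ℝ), x ∈ closure { r : ℝ | ∃ n m : ℕ, r = α ^ n / β ^ m } := by
  have hα0 : (0:ℝ) < α := lt_trans one_pos hα
  have hβ0 : (0:ℝ) < β := lt_trans one_pos hβ
  set la := Real.log α with hla_def
  set lb := Real.log β with hlb_def
  have hla : 0 < la := Real.log_pos hα
  have hlb : 0 < lb := Real.log_pos hβ
  -- the subgroup generated by la and lb is dense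
  have hdense : Dense ((AddSubgroup.closure ({la, lb} : Set ℝ) : AddSubgroup ℝ) : Set ℝ) := by
    rcases AddSubgroup.dense_or_cyclic (AddSubgroup.closure ({la, lb} : Set ℝ)) with h | ⟨a, ha⟩
    · exact h
    · exfalso
      have hlaG : la ∈ AddSubgroup.closure ({la, lb} : Set ℝ) :=
        AddSubgroup.subset_closure (by simp)
      have hlbG : lb ∈ AddSubgroup.closure ({la, lb} : Set ℝ) :=
        AddSubgroup.subset_closure (by simp)
      rw [ha, AddSubgroup.mem_closure_singleton] at hlaG hlbG
      obtain ⟨k, hk⟩ := hlaG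
      obtain ⟨l, hl⟩ := hlbG
      have hkl : (l : ℝ) * la = (k : ℝ) * lb := by
        rw [← hk, ← hl]; push_cast [zsmul_eq_mul]; ring
      have ha0 : a ≠ 0 := by
        rintro rfl; rw [zsmul_zero] at hk; exact hla.ne' hk.symm
      have hk0 : k ≠ 0 := by rintro rfl; simp at hk; exact hla.ne' hk.symm
      have hl0 : l ≠ 0 := by rintro rfl; simp at hl; exact hlb.ne' hl.symm
      have hlR : (l:ℝ) ≠ 0 := Int.cast_ne_zero.mpr hl0
      have heq : (l.natAbs : ℝ) * la = (k.natAbs : ℝ) * lb := by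
        rcases hlR.lt_or_gt with hlneg | hlpos
        · have hkneg : (k:ℝ) < 0 := by nlinarith
          rw [Nat.cast_natAbs, Nat.cast_natAbs, Int.cast_abs, Int.cast_abs]
          rw [abs_of_neg hlneg, abs_of_neg hkneg]
          linarith [hkl]
        · have hkpos : (0:ℝ) < k := by nlinarith
          rw [Nat.cast_natAbs, Nat.cast_natAbs, Int.cast_abs, Int.cast_abs]
          rw [abs_of_pos hlpos, abs_of_pos hkpos]
          linarith [hkl]
      have hpow : α ^ l.natAbs = β ^ k.natAbs := by
        have h1 : α ^ l.natAbs = Real.exp ((l.natAbs : ℝ) * la) := by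
          rw [← Real.exp_log hα0, ← Real.exp_nat_mul]
        have h2 : β ^ k.natAbs = Real.exp ((k.natAbs : ℝ) * lb) := by
          rw [← Real.exp_log hβ0, ← Real.exp_nat_mul]
        rw [h1, h2, heq]
      obtain ⟨h1, h2⟩ := hind _ _ hpow
      exact hl0 (Int.natAbs_eq_zero.mp h1)
  -- key claim: small positive and small negative elements of the form n*la - m*lb
  have key : ∀ ε : ℝ, 0 < ε →
      (∃ n m : ℕ, 0 < (n:ℝ) * la - m * lb ∧ (n:ℝ) * la - m * lb < ε) ∧
      (∃ n m : ℕ, -ε < (n:ℝ) * la - m * lb ∧ (n:ℝ) * la - m * lb < 0) := by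
    intro ε hε
    set ε₀ := min ε (min la lb) with hε₀_def
    have hε₀ : 0 < ε₀ := lt_min hε (lt_min hla hlb)
    have hε₀ε : ε₀ ≤ ε := min_le_left _ _
    have hε₀la : ε₀ ≤ la := le_trans (min_le_right _ _) (min_le_left _ _)
    have hε₀lb : ε₀ ≤ lb := le_trans (min_le_right _ _) (min_le_right _ _)
    obtain ⟨g, hgG, hg⟩ := hdense.exists_mem_open isOpen_Ioo
      (Set.nonempty_Ioo.mpr (by linarith : (0:ℝ) < ε₀))
    rw [SetLike.mem_coe, AddSubgroup.mem_closure_pair] at hgG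
    obtain ⟨p, q, hpq⟩ := hgG
    rw [zsmul_eq_mul, zsmul_eq_mul] at hpq
    obtain ⟨hg0, hgε⟩ := hg
    -- first: get either an A-witness or a B-witness
    have hAorB : (∃ n m : ℕ, 0 < (n:ℝ) * la - m * lb ∧ (n:ℝ) * la - m * lb < ε₀) ∨
        (∃ n m : ℕ, -ε₀ < (n:ℝ) * la - m * lb ∧ (n:ℝ) * la - m * lb < 0) := by
      rcases lt_trichotomy p 0 with hp | hp | hp
      · -- p < 0; must have q > 0; gives B-witness via -g
        have hq : 0 < q := by
          by_contra hq
          push_neg at hq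
          have : (p:ℝ) ≤ -1 := by exact_mod_cast Int.le_sub_one_of_lt hp |>.trans (by simp)
          have hq' : (q:ℝ) ≤ 0 := by exact_mod_cast hq
          nlinarith
        refine Or.inr ⟨(-p).toNat, q.toNat, ?_, ?_⟩
        · have h1 : (((-p).toNat : ℤ) : ℝ) = (-p : ℤ) := by
            exact_mod_cast congrArg Int.cast (Int.toNat_of_nonneg (by omega))
          have h2 : ((q.toNat : ℤ) : ℝ) = (q : ℤ) := by
            exact_mod_cast congrArg Int.cast (Int.toNat_of_nonneg hq.le)
          push_cast at h1 h2 ⊢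
          rw [h1, h2]; push_cast; nlinarith
        · have h1 : (((-p).toNat : ℤ) : ℝ) = (-p : ℤ) := by
            exact_mod_cast congrArg Int.cast (Int.toNat_of_nonneg (by omega))
          have h2 : ((q.toNat : ℤ) : ℝ) = (q : ℤ) := by
            exact_mod_cast congrArg Int.cast (Int.toNat_of_nonneg hq.le)
          push_cast at h1 h2 ⊢
          rw [h1, h2]; push_cast; nlinarith
      · -- p = 0: impossible
        exfalso
        subst hp
        simp at hpq
        rcases lt_trichotomy q 0 with hq | hq | hq
        · have : (q:ℝ) ≤ -1 := by exact_mod_cast Int.le_sub_one_of_lt hq |>.trans (by simp)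
          nlinarith
        · subst hq; simp at hpq; linarith
        · have : (1:ℝ) ≤ q := by exact_mod_cast hq
          nlinarith
      · -- p > 0; must have q < 0; gives A-witness
        have hq : q < 0 := by
          by_contra hq
          push_neg at hq
          have hp' : (1:ℝ) ≤ p := by exact_mod_cast hp
          have hq' : (0:ℝ) ≤ q := by exact_mod_cast hq
          nlinarith
        refine Or.inl ⟨p.toNat, (-q).toNat, ?_, ?_⟩
        · have h1 : ((p.toNat : ℤ) : ℝ) = (p : ℤ) := by
            exact_mod_cast congrArg Int.cast (Int.toNat_of_nonneg hp.le)
          have h2 : (((-q).toNat : ℤ) : ℝ) = (-q : ℤ) := by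
            exact_mod_cast congrArg Int.cast (Int.toNat_of_nonneg (by omega))
          push_cast at h1 h2 ⊢
          rw [h1, h2]; push_cast; nlinarith
        · have h1 : ((p.toNat : ℤ) : ℝ) = (p : ℤ) := by
            exact_mod_cast congrArg Int.cast (Int.toNat_of_nonneg hp.le)
          have h2 : (((-q).toNat : ℤ) : ℝ) = (-q : ℤ) := by
            exact_mod_cast congrArg Int.cast (Int.toNat_of_nonneg (by omega))
          push_cast at h1 h2 ⊢
          rw [h1, h2]; push_cast; nlinarith
    -- bootstrap: from one witness get the other
    rcases hAorB with ⟨n, m, hA1, hA2⟩ | ⟨n, m, hB1, hB2⟩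
    · -- have A-witness s ∈ (0, ε₀); get B-witness: -lb + k*s
      refine ⟨⟨n, m, by linarith, by linarith⟩, ?_⟩
      set s := (n:ℝ) * la - m * lb with hs_def
      obtain ⟨k, hk1, hk2⟩ := exists_step_down (by linarith : -s < 0) hlb hε₀lb
        (by linarith : -ε₀ < -s)
      have heq : ((k * n : ℕ):ℝ) * la - ((1 + k * m : ℕ):ℝ) * lb = -(lb + (k:ℝ) * (-s)) := by
        push_cast; ring
      exact ⟨k * n, 1 + k * m, by rw [heq]; linarith, by rw [heq]; linarith⟩
    · -- have B-witness s' ∈ (-ε₀, 0); get A-witness: la + k*s'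
      refine ⟨?_, ⟨n, m, by linarith, by linarith⟩⟩
      set s := (n:ℝ) * la - m * lb with hs_def
      obtain ⟨k, hk1, hk2⟩ := exists_step_down hB2 hla hε₀la hB1
      have heq : ((1 + k * n : ℕ):ℝ) * la - ((k * m : ℕ):ℝ) * lb = la + (k:ℝ) * s := by
        push_cast; ring
      exact ⟨1 + k * n, k * m, by rw [heq]; linarith, by rw [heq]; linarith⟩
  -- main argument
  intro x hx
  rw [Set.mem_Ioi] at hx
  rw [Metric.mem_closure_iff]
  intro ε hε
  set t := Real.log x with ht_def
  -- continuity of exp at t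
  obtain ⟨δ, hδ, hδ'⟩ := Metric.continuousAt_iff.mp (Real.continuous_exp.continuousAt (x := t)) ε hε
  obtain ⟨⟨n₁, m₁, hs1, hs2⟩, ⟨n₂, m₂, hs1', hs2'⟩⟩ := key δ hδ
  -- find n, m with |n*la - m*lb - t| < δ
  have main : ∃ n m : ℕ, |(n:ℝ) * la - m * lb - t| < δ := by
    rcases le_or_gt 0 t with ht | ht
    · -- use positive small element s, multiples k*s
      set s := (n₁:ℝ) * la - m₁ * lb with hs_def
      have harch : ∃ k : ℕ, t < (k:ℝ) * s := by
        obtain ⟨k, hk⟩ := Archimedean.arch t hs1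
        exact ⟨k + 1, by push_cast; simp only [nsmul_eq_mul] at hk; nlinarith⟩
      classical
      obtain ⟨k, hk1, hkmin⟩ : ∃ k : ℕ, (t < (k:ℝ) * s) ∧ ∀ j < k, ¬ (t < (j:ℝ) * s) :=
        ⟨Nat.find harch, Nat.find_spec harch, fun j hj => Nat.find_min harch hj⟩
      have hk0 : k ≠ 0 := by
        rintro rfl
        push_cast at hk1; linarith
      have hkprev : ¬ (t < ((k - 1 : ℕ):ℝ) * s) := hkmin (k-1) (by omega)
      push_neg at hkprev
      have hstep : (k:ℝ) * s = ((k - 1 : ℕ):ℝ) * s + s := by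
        rw [Nat.cast_pred (Nat.pos_of_ne_zero hk0)]; ring
      refine ⟨k * n₁, k * m₁, ?_⟩
      have hval : ((k * n₁ : ℕ):ℝ) * la - ((k * m₁ : ℕ):ℝ) * lb = k * s := by
        push_cast; ring
      rw [hval, abs_lt]
      exact ⟨by linarith, by linarith⟩
    · -- t < 0: use negative small element
      set s := (n₂:ℝ) * la - m₂ * lb with hs_def
      have harch : ∃ k : ℕ, (k:ℝ) * s < t := by
        obtain ⟨k, hk⟩ := Archimedean.arch (-t) (by linarith : (0:ℝ) < -s)
        refine ⟨k + 1, ?_⟩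
        simp only [nsmul_eq_mul] at hk
        push_cast; nlinarith
      classical
      obtain ⟨k, hk1, hkmin⟩ : ∃ k : ℕ, ((k:ℝ) * s < t) ∧ ∀ j < k, ¬ ((j:ℝ) * s < t) :=
        ⟨Nat.find harch, Nat.find_spec harch, fun j hj => Nat.find_min harch hj⟩
      have hk0 : k ≠ 0 := by
        rintro rfl
        push_cast at hk1; linarith
      have hkprev : ¬ (((k - 1 : ℕ):ℝ) * s < t) := hkmin (k-1) (by omega)
      push_neg at hkprev
      have hstep : (k:ℝ) * s = ((k - 1 : ℕ):ℝ) * s + s := by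
        rw [Nat.cast_pred (Nat.pos_of_ne_zero hk0)]; ring
      refine ⟨k * n₂, k * m₂, ?_⟩
      have hval : ((k * n₂ : ℕ):ℝ) * la - ((k * m₂ : ℕ):ℝ) * lb = k * s := by
        push_cast; ring
      rw [hval, abs_lt]
      exact ⟨by linarith, by linarith⟩
  obtain ⟨n, m, hnm⟩ := main
  refine ⟨α ^ n / β ^ m, ⟨n, m, rfl⟩, ?_⟩
  have hexpa : Real.exp la = α := Real.exp_log hα0
  have hexpb : Real.exp lb = β := Real.exp_log hβ0
  have hr : α ^ n / β ^ m = Real.exp ((n:ℝ) * la - m * lb) := by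
    rw [Real.exp_sub, Real.exp_nat_mul, Real.exp_nat_mul, hexpa, hexpb]
  have hxexp : x = Real.exp t := (Real.exp_log hx).symm
  rw [hr, hxexp, dist_comm]
  exact hδ' (by rwa [Real.dist_eq])
end
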